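/- arXiv:1806.02234 — 2 statements merged into one kernel-verified Lean document; each statement's English description precedes it below -/
import Mathlib

section
/- Fix d ≥ 1, m ≥ d, and let p = ((m log n + ω(n))/n)^{1/C(m,d)} where ω(n) → ∞. Then asymptotically almost surely γ̃(Δ_d(G_d(n,p))) ≥ m + 1, i.e., the probability that the d-clique complex of the random complex G_d(n,p) has a strong dominating set of size at most m tends to 0 as n → ∞. -/
open scoped BigOperators ENNReal

/-- An abstract simplicial complex on vertex type `V`: a downward-closed set of finsets. -/
structure Cx (V : Type*) where
  faces : Set (Finset V)
  down : ∀ ⦃s t : Finset V⦄, s ∈ faces → t ⊆ s → t ∈ faces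

namespace Cx

variable {V : Type*}

/-- `fcount K i` is the number of `i`-dimensional faces of `K`. -/
noncomputable def fcount (K : Cx V) (i : ℕ) : ℕ :=
  Nat.card {s : Finset V // s ∈ K.faces ∧ s.card = i + 1}

/-- Induced subcomplex on a vertex subset `S`. -/
def induced (K : Cx V) (S : Finset V) : Cx V :=
  ⟨{s | s ∈ K.faces ∧ s ⊆ S}, fun s t hs hts => ⟨K.down hs.1 hts, hts.trans hs.2⟩⟩

/-- The `d`-skeleton of a complex. -/
def skel (K : Cx V) (d : ℕ) : Cx V :=
  ⟨{s | s ∈ K.faces ∧ s.card ≤ d + 1}, fun s t hs hts =>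
    ⟨K.down hs.1 hts, le_trans (Finset.card_le_card hts) hs.2⟩⟩

/-- Number of vertices of a complex. -/
noncomputable def vertCount (K : Cx V) : ℕ := Nat.card {v : V // {v} ∈ K.faces}

/-- The link of a vertex. -/
def linkCx [DecidableEq V] (K : Cx V) (v : V) : Cx V :=
  ⟨{τ | v ∉ τ ∧ insert v τ ∈ K.faces},
   fun s t hs hts => ⟨fun h => hs.1 (hts h), K.down hs.2 (Finset.insert_subset_insert v hts)⟩⟩

end Cx

/-- The `(k+1)`-fold join `∂Δ_{d+1} * ⋯ * ∂Δ_{d+1}` of boundaries of `d`-simplices: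
a set of vertices is a face iff it misses at least one vertex of each join factor. -/
def Kjoin (d k : ℕ) : Cx (Fin (k+1) × Fin (d+1)) :=
  ⟨{s | ∀ m : Fin (k+1), ∃ i : Fin (d+1), (m, i) ∉ s},
   fun s t hs hts m => (hs m).imp fun _ hi h => hi (hts h)⟩

/-- The `d`-clique complex of `K`: faces are all vertex sets all of whose
`(d+1)`-subsets are faces of `K`. -/
def cliqueCx (d : ℕ) (K : Cx V) : Cx V :=
  ⟨{s | ∀ t ⊆ s, t.card = d + 1 → t ∈ K.faces},
   fun s t hs hts u hut hu => hs u (hut.trans hts) hu⟩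

section Chains

variable {V : Type*} [LinearOrder V]

/-- Simplicial boundary operator (with the augmentation convention: the boundary of a
vertex is the empty set with coefficient 1, so cycles compute *reduced* homology). -/
noncomputable def bdry (γ : Finset V →₀ ℤ) : Finset V →₀ ℤ :=
  γ.sum fun s c => ∑ v ∈ s, Finsupp.single (s.erase v)
    (c * (-1) ^ ((s.sort (· ≤ ·)).idxOf v))

/-- `γ` is a `k`-chain of the complex `K`. -/
def IsChainOf (K : Cx V) (k : ℕ) (γ : Finset V →₀ ℤ) : Prop :=
  ∀ s ∈ γ.support, s ∈ K.faces ∧ s.card = k + 1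

/-- `γ` is a (reduced) `k`-cycle of `K`. -/
def IsCycleOf (K : Cx V) (k : ℕ) (γ : Finset V →₀ ℤ) : Prop :=
  IsChainOf K k γ ∧ bdry γ = 0

/-- `γ` is a `k`-boundary in `K`. -/
def IsBoundaryOf (K : Cx V) (k : ℕ) (γ : Finset V →₀ ℤ) : Prop :=
  ∃ β, IsChainOf K (k+1) β ∧ bdry β = γ

/-- `γ` is a nontrivial `k`-cycle: it represents a nonzero class in reduced homology
`H̃ₖ(K; ℤ)`. -/
def IsNontrivialCycle (K : Cx V) (k : ℕ) (γ : Finset V →₀ ℤ) : Prop :=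
  IsCycleOf K k γ ∧ ¬ IsBoundaryOf K k γ

/-- The vertex support of a chain. -/
def vsupp (γ : Finset V →₀ ℤ) : Finset V := γ.support.biUnion id

/-- The restriction `γ ∩ link(v)` of a chain to the link of a vertex `v`: a `(k-1)`-face
`τ` gets the (signed) coefficient of `τ ∪ {v}` in `γ`. -/
noncomputable def restrictLink (v : V) (γ : Finset V →₀ ℤ) : Finset V →₀ ℤ :=
  γ.sum fun s c => if v ∈ s then
    Finsupp.single (s.erase v) (c * (-1) ^ ((s.sort (· ≤ ·)).idxOf v)) else 0

end Chains

section Topology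

open Classical in
/-- The geometric realization of a complex on a finite vertex set, as a subset of `V → ℝ`. -/
noncomputable def realizationSet {V : Type*} [Fintype V] (K : Cx V) : Set (V → ℝ) :=
  {f | (∀ v, 0 ≤ f v) ∧ (∑ v, f v) = 1 ∧ (Finset.univ.filter fun v => f v ≠ 0) ∈ K.faces}

/-- `K` is `k`-connected: every continuous map from a sphere `S^i`, `i ≤ k`, to the
geometric realization of `K` is nullhomotopic. -/
def KConn {V : Type*} [Fintype V] (K : Cx V) (k : ℕ) : Prop :=
  ∀ i ≤ k, ∀ f : C(Metric.sphere (0 : EuclideanSpace ℝ (Fin (i+1))) 1, realizationSet K),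
    ∃ y, ContinuousMap.Homotopic f (ContinuousMap.const _ y)

end Topology

section Domination

variable {V : Type*} [DecidableEq V]

/-- `s̃p_K(A)`: the set of vertices `v` for which some face `σ ⊆ A` satisfies
`σ ∪ {v} ∉ K`. -/
def spTilde (K : Cx V) (A : Finset V) : Set V :=
  {v | ∃ σ : Finset V, σ ∈ K.faces ∧ σ ⊆ A ∧ insert v σ ∉ K.faces}

/-- `A` is a strong dominating set of `K`. -/
def IsStrongDom (K : Cx V) (A : Finset V) : Prop := ∀ v : V, v ∈ spTilde K A

/-- The strong domination number `γ̃(K)` (`⊤` if there is no strong dominating set). -/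
noncomputable def gammaTilde (K : Cx V) : ℕ∞ :=
  sInf {n : ℕ∞ | ∃ A : Finset V, IsStrongDom K A ∧ (A.card : ℕ∞) = n}

end Domination

section StrongConn

variable {V : Type*} [DecidableEq V]

/-- A facet: a maximal face. -/
def IsFacet (K : Cx V) (s : Finset V) : Prop :=
  s ∈ K.faces ∧ ∀ t ∈ K.faces, s ⊆ t → t = s

/-- `K` is a strongly connected `k`-dimensional complex: pure of dimension `k` and any
two facets are joined by a chain of facets, consecutive ones sharing a `(k-1)`-face. -/
def StronglyConnected (K : Cx V) (k : ℕ) : Prop :=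
  (∃ s, s ∈ K.faces ∧ s.card = k + 1) ∧
  (∀ s, IsFacet K s → s.card = k + 1) ∧
  ∀ s t, IsFacet K s → IsFacet K t →
    Relation.ReflTransGen (fun a b => IsFacet K a ∧ IsFacet K b ∧ (a ∩ b).card = k) s t

end StrongConn

section Random

open MeasureTheory

/-- Bernoulli measure on `Bool` with parameter `p` (truncated at 1). -/
noncomputable def bern (p : ℝ≥0∞) : Measure Bool :=
  (PMF.bernoulli (min p 1).toNNReal
    (by simpa using ENNReal.toNNReal_mono ENNReal.one_ne_top (min_le_right p 1))).toMeasure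

instance (p : ℝ≥0∞) : IsProbabilityMeasure (bern p) := by
  unfold bern; infer_instance

/-- Sample space for the random complex `G_d(n,p)`: a coin for each potential `d`-face. -/
abbrev RandOmega (d n : ℕ) := {s : Finset (Fin n) // s.card = d + 1} → Bool

/-- The law of `G_d(n,p)`: independent Bernoulli(p) coins for the `d`-faces. -/
noncomputable def randMeasure (d n : ℕ) (p : ℝ≥0∞) : Measure (RandOmega d n) :=
  Measure.pi fun _ => bern p

/-- The random `d`-complex `G_d(n,p)` determined by the sample `ω`: full
`(d-1)`-skeleton, and the `d`-faces chosen by `ω`. -/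
def randCx (d n : ℕ) (ω : RandOmega d n) : Cx (Fin n) :=
  ⟨{s | s.card ≤ d ∨ ∃ h : s.card = d + 1, ω ⟨s, h⟩ = true}, by
    rintro s t hs hts
    rcases hs with h | ⟨h, hω⟩
    · exact Or.inl (le_trans (Finset.card_le_card hts) h)
    · have hle := Finset.card_le_card hts
      rcases eq_or_lt_of_le hle with heq | hlt
      · have : t = s := Finset.eq_of_subset_of_card_le hts (le_of_eq heq.symm)
        subst this; exact Or.inr ⟨h, hω⟩
      · exact Or.inl (by omega)⟩

end Random

/-!
If a set `A` with `|A| ≤ m` strongly dominates `Δ_d(G)`, then for every vertex `v ∉ A` one of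
the `C(|A|, d)` `d`-faces of the simplex `A ∪ {v}` through `v` is missing from `G`. These face
sets are disjoint for distinct `v`, so by independence this has probability at most
`(1 - p^{C(m,d)})^{n-m} ≤ exp (-(n - m) p^{C(m,d)})`. A union bound over the at most
`(m + 1) n^m` candidate sets leaves `n^m exp (-(n - m)(m log n + ω(n))/n) ≤ e^m e^{-ω(n)}`
(or `e^m n^m e^{-n}` once `p` is truncated at `1`), which tends to `0`.
-/

open MeasureTheory ProbabilityTheory Filter Topology

section BlockEvents

variable {ι V : Type*} [Fintype ι] (ν : Measure Bool) [IsProbabilityMeasure ν]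

theorem measure_pi_exists_false (B : Finset ι) :
    Measure.pi (fun _ : ι ↦ ν) {ω | ∃ i ∈ B, ω i = false} = 1 - ν {true} ^ B.card := by
  have hcompl :
      {ω : ι → Bool | ∃ i ∈ B, ω i = false} = ((B : Set ι).pi fun _ ↦ {true})ᶜ := by
    ext ω; simp
  rw [hcompl, prob_compl_eq_one_sub (DiscreteMeasurableSpace.forall_measurableSet _),
    Measure.pi_pi_finset, Finset.prod_const]

theorem measure_pi_forall_exists_false (T : Finset V) (B : V → Finset ι)
    (hB : (T : Set V).PairwiseDisjoint B) :
    Measure.pi (fun _ : ι ↦ ν) {ω | ∀ v ∈ T, ∃ i ∈ B v, ω i = false}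
      = ∏ v ∈ T, (1 - ν {true} ^ (B v).card) := by
  classical
  induction T using Finset.induction_on with
  | empty => simp
  | insert a T haT ih =>
    rw [Finset.coe_insert] at hB
    have hdisj : Disjoint (B a) (T.biUnion B) :=
      (Finset.disjoint_biUnion_right _ _ _).2 fun v hv ↦
        hB (Set.mem_insert a _) (Set.mem_insert_of_mem a hv) (ne_of_mem_of_not_mem hv haT).symm
    have hindep : IndepFun (fun ω (i : B a) ↦ ω i) (fun ω (i : T.biUnion B) ↦ ω i)
        (Measure.pi fun _ : ι ↦ ν) :=
      (iIndepFun_pi (X := fun _ ↦ id) fun _ ↦ aemeasurable_id).indepFun_finset _ _ hdisj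
        fun _ ↦ measurable_pi_apply _
    have hfirst : {ω : ι → Bool | ∃ i ∈ B a, ω i = false}
        = (fun ω (i : B a) ↦ ω i) ⁻¹' {g | ∃ i, g i = false} := by
      ext ω; simp
    have hrest : {ω : ι → Bool | ∀ v ∈ T, ∃ i ∈ B v, ω i = false}
        = (fun ω (i : T.biUnion B) ↦ ω i) ⁻¹'
            {g | ∀ v ∈ T, ∃ i : T.biUnion B, i.1 ∈ B v ∧ g i = false} := by
      ext ω
      refine forall₂_congr fun v hv ↦ ⟨?_, ?_⟩
      · rintro ⟨i, hi, hω⟩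
        exact ⟨⟨i, Finset.mem_biUnion.2 ⟨v, hv, hi⟩⟩, hi, hω⟩
      · rintro ⟨i, hi, hω⟩
        exact ⟨i, hi, hω⟩
    have hsplit : {ω : ι → Bool | ∀ v ∈ insert a T, ∃ i ∈ B v, ω i = false}
        = {ω | ∃ i ∈ B a, ω i = false} ∩
          {ω | ∀ v ∈ T, ∃ i ∈ B v, ω i = false} := by
      ext ω; simp
    rw [hsplit, hfirst, hrest, hindep.measure_inter_preimage_eq_mul _ _
      (DiscreteMeasurableSpace.forall_measurableSet _)
      (DiscreteMeasurableSpace.forall_measurableSet _), ← hfirst, ← hrest,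
      measure_pi_exists_false, ih (hB.subset (Set.subset_insert a _)), Finset.prod_insert haT]

end BlockEvents

theorem Cx.exists_notMem_of_insert_notMem_cliqueCx {V : Type*} [DecidableEq V] {d : ℕ}
    {K : Cx V} {σ : Finset V} {v : V} (hσ : σ ∈ (cliqueCx d K).faces)
    (hv : insert v σ ∉ (cliqueCx d K).faces) :
    ∃ t ⊆ insert v σ, v ∈ t ∧ t.card = d + 1 ∧ t ∉ K.faces := by
  simp only [cliqueCx, Set.mem_ofPred_eq, not_forall] at hσ hv
  obtain ⟨t, hts, htc, htK⟩ := hv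
  refine ⟨t, hts, ?_, htc, htK⟩
  by_contra hvt
  exact htK (hσ t ((Finset.subset_insert_iff_of_notMem hvt).1 hts) htc)

theorem coin_eq_false_of_notMem_randCx {d n : ℕ} {ω : RandOmega d n} {t : Finset (Fin n)}
    (ht : t.card = d + 1) (htω : t ∉ (randCx d n ω).faces) : ω ⟨t, ht⟩ = false := by
  simp only [randCx, Set.mem_ofPred_eq, not_or, not_exists, Bool.not_eq_true] at htω
  exact htω.2 ht

def coneFaces (d n : ℕ) (A : Finset (Fin n)) (v : Fin n) :
    Finset {s : Finset (Fin n) // s.card = d + 1} :=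
  {t | v ∈ t.1 ∧ t.1 ⊆ insert v A}

theorem exists_coneFaces_false_of_isStrongDom {d n : ℕ} {ω : RandOmega d n}
    {A : Finset (Fin n)} (hA : IsStrongDom (cliqueCx d (randCx d n ω)) A) (v : Fin n) :
    ∃ t ∈ coneFaces d n A v, ω t = false := by
  obtain ⟨σ, hσ, hσA, hv⟩ := hA v
  obtain ⟨t, hts, hvt, htc, htω⟩ := Cx.exists_notMem_of_insert_notMem_cliqueCx hσ hv
  refine ⟨⟨t, htc⟩, ?_, coin_eq_false_of_notMem_randCx htc htω⟩
  simp only [coneFaces, Finset.mem_filter, Finset.mem_univ, true_and]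
  exact ⟨hvt, hts.trans (Finset.insert_subset_insert v hσA)⟩

theorem card_coneFaces_le (d n : ℕ) (A : Finset (Fin n)) (v : Fin n) :
    (coneFaces d n A v).card ≤ A.card.choose d := by
  have mem_cone {t : {s : Finset (Fin n) // s.card = d + 1}} (ht : t ∈ coneFaces d n A v) :
      v ∈ t.1 ∧ t.1 ⊆ insert v A := by
    simpa [coneFaces] using ht
  rw [← Finset.card_powersetCard]
  refine Finset.card_le_card_of_injOn (fun t ↦ t.1.erase v) (fun t ht ↦ ?_)
    (fun s hs t ht hst ↦ Subtype.ext ?_)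
  · obtain ⟨hvt, htA⟩ := mem_cone ht
    refine Finset.mem_powersetCard.2 ⟨Finset.subset_insert_iff.1 htA, ?_⟩
    rw [Finset.card_erase_of_mem hvt, t.2, Nat.add_sub_cancel]
  · rw [← Finset.insert_erase (mem_cone hs).1, ← Finset.insert_erase (mem_cone ht).1]
    exact congrArg _ hst

theorem pairwiseDisjoint_coneFaces (d n : ℕ) (A : Finset (Fin n)) :
    ((Aᶜ : Finset (Fin n)) : Set (Fin n)).PairwiseDisjoint (coneFaces d n A) := by
  intro v _ u hu hvu
  rw [Function.onFun, Finset.disjoint_left]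
  intro t hv hu'
  simp only [coneFaces, Finset.mem_filter, Finset.mem_univ, true_and] at hv hu'
  rcases Finset.mem_insert.1 (hv.2 hu'.1) with h | h
  · exact hvu h.symm
  · exact (Finset.mem_compl.1 hu) h

theorem bern_singleton_true (p : ℝ≥0∞) : bern p {true} = min p 1 := by
  rw [bern, PMF.toMeasure_apply_singleton _ _ (measurableSet_singleton _)]
  exact ENNReal.coe_toNNReal (ne_top_of_le_ne_top ENNReal.one_ne_top (min_le_right _ _))

theorem randMeasure_isStrongDom_le {d n m : ℕ} (p : ℝ≥0∞) {A : Finset (Fin n)}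
    (hA : A.card ≤ m) :
    randMeasure d n p {ω | IsStrongDom (cliqueCx d (randCx d n ω)) A}
      ≤ (1 - min p 1 ^ m.choose d) ^ (n - m) := by
  have hq : min p 1 ≤ 1 := min_le_right _ _
  calc randMeasure d n p {ω | IsStrongDom (cliqueCx d (randCx d n ω)) A}
      ≤ randMeasure d n p {ω | ∀ v ∈ Aᶜ, ∃ t ∈ coneFaces d n A v, ω t = false} :=
        measure_mono fun ω hω v _ ↦ exists_coneFaces_false_of_isStrongDom hω v
    _ = ∏ v ∈ Aᶜ, (1 - min p 1 ^ (coneFaces d n A v).card) := by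
        rw [randMeasure, measure_pi_forall_exists_false _ _ _ (pairwiseDisjoint_coneFaces d n A),
          bern_singleton_true]
    _ ≤ ∏ _v ∈ Aᶜ, (1 - min p 1 ^ m.choose d) :=
        Finset.prod_le_prod' fun v _ ↦ tsub_le_tsub_left (pow_le_pow_of_le_one zero_le hq
          ((card_coneFaces_le d n A v).trans (Nat.choose_le_choose d hA))) 1
    _ = (1 - min p 1 ^ m.choose d) ^ (n - A.card) := by
        rw [Finset.prod_const, Finset.card_compl, Fintype.card_fin]
    _ ≤ (1 - min p 1 ^ m.choose d) ^ (n - m) :=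
        pow_le_pow_of_le_one zero_le tsub_le_self (Nat.sub_le_sub_left hA n)

open Finset in
theorem card_filter_card_le_le {α : Type*} [Fintype α] (hα : 0 < Fintype.card α) (m : ℕ) :
    #{A : Finset α | A.card ≤ m} ≤ (m + 1) * Fintype.card α ^ m := by
  classical
  have hcover : ({A : Finset α | A.card ≤ m} : Finset (Finset α))
      ⊆ (range (m + 1)).biUnion fun k ↦ powersetCard k univ :=
    fun A hA ↦ mem_biUnion.2 ⟨A.card, mem_range.2 (Nat.lt_succ_of_le (mem_filter.1 hA).2),
      mem_powersetCard.2 ⟨subset_univ A, rfl⟩⟩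
  calc _ ≤ ∑ k ∈ range (m + 1), #(powersetCard k (univ : Finset α)) :=
        (card_le_card hcover).trans card_biUnion_le
    _ ≤ ∑ _k ∈ range (m + 1), Fintype.card α ^ m := sum_le_sum fun k hk ↦ by
        rw [card_powersetCard, card_univ]
        exact (Nat.choose_le_pow _ k).trans
          (Nat.pow_le_pow_right hα (Nat.lt_succ_iff.1 (mem_range.1 hk)))
    _ = (m + 1) * Fintype.card α ^ m := by
        rw [sum_const, card_range, smul_eq_mul]

theorem randMeasure_exists_isStrongDom_le {d n : ℕ} (m : ℕ) (p : ℝ≥0∞) (hn : 0 < n) :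
    randMeasure d n p
        {ω | ∃ A : Finset (Fin n), A.card ≤ m ∧ IsStrongDom (cliqueCx d (randCx d n ω)) A}
      ≤ ((m + 1) * n ^ m : ℕ) * (1 - min p 1 ^ m.choose d) ^ (n - m) := by
  set small := Finset.univ.filter fun A : Finset (Fin n) ↦ A.card ≤ m
  have hunion : {ω : RandOmega d n |
        ∃ A : Finset (Fin n), A.card ≤ m ∧ IsStrongDom (cliqueCx d (randCx d n ω)) A}
      = ⋃ A ∈ small, {ω | IsStrongDom (cliqueCx d (randCx d n ω)) A} := by
    ext ω; simp [small]
  have hsmall : small.card ≤ (m + 1) * n ^ m := by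
    simpa using card_filter_card_le_le (α := Fin n) (by simpa using hn) m
  rw [hunion]
  calc _ ≤ ∑ A ∈ small, randMeasure d n p {ω | IsStrongDom (cliqueCx d (randCx d n ω)) A} :=
        measure_biUnion_finset_le _ _
    _ ≤ small.card • (1 - min p 1 ^ m.choose d) ^ (n - m) :=
        Finset.sum_le_card_nsmul _ _ _ fun A hA ↦
          randMeasure_isStrongDom_le p (Finset.mem_filter.1 hA).2
    _ ≤ _ := by
        rw [nsmul_eq_mul]
        gcongr

theorem one_sub_min_ofReal_rpow_pow_le {C : ℕ} (hC : C ≠ 0) (r : ℝ) :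
    1 - min (ENNReal.ofReal (r ^ ((1 : ℝ) / C))) 1 ^ C
      ≤ ENNReal.ofReal (Real.exp (-min r 1)) := by
  rcases le_or_gt r 0 with hr0 | hr0
  · refine tsub_le_self.trans (ENNReal.one_le_ofReal.2 (Real.one_le_exp ?_))
    linarith [min_le_left r 1]
  have hroot : (r ^ ((1 : ℝ) / C)) ^ C = r := by
    rw [← Real.rpow_natCast, ← Real.rpow_mul hr0.le,
      one_div_mul_cancel (Nat.cast_ne_zero.2 hC), Real.rpow_one]
  have hpow : min (ENNReal.ofReal (r ^ ((1 : ℝ) / C))) 1 ^ C = ENNReal.ofReal (min r 1) := by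
    rw [(pow_left_mono C).map_min, one_pow, ← ENNReal.ofReal_pow (by positivity), hroot,
      ENNReal.ofReal_min, ENNReal.ofReal_one]
  rw [hpow, ← ENNReal.ofReal_one, ← ENNReal.ofReal_sub _ (by positivity)]
  exact ENNReal.ofReal_le_ofReal (Real.one_sub_le_exp_neg _)

theorem pow_mul_exp_neg_mul_min_le {n : ℕ} (hn : 0 < n) (m : ℕ) (w : ℝ) :
    (n : ℝ) ^ m * Real.exp (-(((n : ℝ) - m) * min (((m : ℝ) * Real.log n + w) / n) 1))
      ≤ Real.exp m * (Real.exp (-w) + (n : ℝ) ^ m * Real.exp (-n)) := by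
  have hn' : (0 : ℝ) < n := Nat.cast_pos.2 hn
  have hpow : (n : ℝ) ^ m = Real.exp (m * Real.log n) := by
    rw [← Real.log_pow, Real.exp_log (pow_pos hn' m)]
  rcases le_or_gt (((m : ℝ) * Real.log n + w) / n) 1 with hr | hr
  · rw [min_eq_left hr]
    calc _ = Real.exp (-w + m * (((m : ℝ) * Real.log n + w) / n)) := by
          rw [hpow, ← Real.exp_add]; congr 1; field_simp; ring
      _ ≤ Real.exp (m - w) :=
          Real.exp_le_exp.2 (by nlinarith [(Nat.cast_nonneg m : (0 : ℝ) ≤ m)])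
      _ ≤ _ := by
          rw [sub_eq_add_neg, Real.exp_add]
          gcongr
          exact le_add_of_nonneg_right (by positivity)
  · rw [min_eq_right hr.le]
    calc _ = Real.exp m * ((n : ℝ) ^ m * Real.exp (-n)) := by
          rw [mul_one, neg_sub, sub_eq_add_neg, Real.exp_add]; ring
      _ ≤ _ := by
          gcongr
          exact le_add_of_nonneg_left (by positivity)

theorem tendsto_exp_neg_add_pow_mul_exp_neg {w : ℕ → ℝ} (hw : Tendsto w atTop atTop)
    (m : ℕ) :
    Tendsto (fun n : ℕ ↦ Real.exp (-w n) + (n : ℝ) ^ m * Real.exp (-n)) atTop (𝓝 0) := by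
  simpa using (Real.tendsto_exp_neg_atTop_nhds_zero.comp hw).add
    ((Real.tendsto_pow_mul_exp_neg_atTop_nhds_zero m).comp tendsto_natCast_atTop_atTop)

theorem randMeasure_exists_isStrongDom_le_ofReal {d m : ℕ} (hC : m.choose d ≠ 0) (w : ℝ)
    {n : ℕ} (hn : 0 < n) (hmn : m ≤ n) :
    randMeasure d n (ENNReal.ofReal ((((m : ℝ) * Real.log n + w) / n) ^ ((1 : ℝ) / m.choose d)))
        {ω | ∃ A : Finset (Fin n), A.card ≤ m ∧ IsStrongDom (cliqueCx d (randCx d n ω)) A}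
      ≤ ENNReal.ofReal
          ((m + 1) * (Real.exp m * (Real.exp (-w) + (n : ℝ) ^ m * Real.exp (-n)))) := by
  set r := ((m : ℝ) * Real.log n + w) / n
  calc _ ≤ ((m + 1) * n ^ m : ℕ) * (1 - min (ENNReal.ofReal (r ^ ((1 : ℝ) / m.choose d))) 1
          ^ m.choose d) ^ (n - m) := randMeasure_exists_isStrongDom_le m _ hn
    _ ≤ ((m + 1) * n ^ m : ℕ) * ENNReal.ofReal (Real.exp (-min r 1)) ^ (n - m) := by
        gcongr
        exact one_sub_min_ofReal_rpow_pow_le hC r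
    _ = ENNReal.ofReal ((m + 1) * ((n : ℝ) ^ m * Real.exp (-(((n : ℝ) - m) * min r 1)))) := by
        rw [← ENNReal.ofReal_pow (Real.exp_nonneg _), ← Real.exp_nat_mul,
          ← ENNReal.ofReal_natCast, ← ENNReal.ofReal_mul (Nat.cast_nonneg _), Nat.cast_sub hmn]
        push_cast
        ring_nf
    _ ≤ _ := ENNReal.ofReal_le_ofReal
        (mul_le_mul_of_nonneg_left (pow_mul_exp_neg_mul_min_le hn m w) (by positivity))

theorem stmt8_general (d m : ℕ) (hm : d ≤ m) (w : ℕ → ℝ)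
    (hw : Filter.Tendsto w Filter.atTop Filter.atTop) :
    Filter.Tendsto (fun n : ℕ =>
      randMeasure d n (ENNReal.ofReal ((((m : ℝ) * Real.log n + w n) / n) ^ ((1:ℝ) / (m.choose d))))
        {ω | ∃ A : Finset (Fin n), A.card ≤ m ∧ IsStrongDom (cliqueCx d (randCx d n ω)) A})
      Filter.atTop (nhds 0) := by
  have hC : m.choose d ≠ 0 := (Nat.choose_pos hm).ne'
  have hbound : Tendsto (fun n : ℕ ↦ ENNReal.ofReal ((m + 1) *
      (Real.exp m * (Real.exp (-w n) + (n : ℝ) ^ m * Real.exp (-n))))) atTop (𝓝 0) := by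
    simpa using ENNReal.tendsto_ofReal (((tendsto_exp_neg_add_pow_mul_exp_neg hw m).const_mul
      (Real.exp m)).const_mul ((m : ℝ) + 1))
  refine tendsto_of_tendsto_of_tendsto_of_le_of_le' tendsto_const_nhds hbound
    (Eventually.of_forall fun _ ↦ zero_le) ?_
  filter_upwards [eventually_ge_atTop (max 1 m)] with n hn
  exact randMeasure_exists_isStrongDom_le_ofReal hC (w n) (by omega) (le_of_max_le_right hn)

/-- If `p = ((m log n + ω(n))/n)^{1/C(m,d)}` with `ω(n) → ∞`, then
a.a.s. `γ̃(Δ_d(G_d(n,p))) ≥ m + 1`: the probability that the `d`-clique complex of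
`G_d(n,p)` has a strong dominating set of size at most `m` tends to `0`. -/
theorem stmt8 (d m : ℕ) (hd : 1 ≤ d) (hm : d ≤ m) (w : ℕ → ℝ)
    (hw : Filter.Tendsto w Filter.atTop Filter.atTop) :
    Filter.Tendsto (fun n : ℕ =>
      randMeasure d n (ENNReal.ofReal ((((m : ℝ) * Real.log n + w n) / n) ^ ((1:ℝ) / (m.choose d))))
        {ω | ∃ A : Finset (Fin n), A.card ≤ m ∧ IsStrongDom (cliqueCx d (randCx d n ω)) A})
      Filter.atTop (nhds 0) :=
  stmt8_general d m hm w hw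
end

section
/- Let Δ be a strongly connected k-dimensional simplicial complex on v vertices. Then the number of d-dimensional faces of Δ is at least C(k+1, d+1) + C(k,d)·(v − k − 1), for any 0 ≤ d ≤ k. -/
open scoped BigOperators ENNReal

/-! Starting from a `k`-face `σ`, grow a vertex set `W ⊇ σ` one vertex at a time. As long as
`W` misses a vertex, a chain of ridge-adjacent facets from `σ` to a facet through that vertex
must leave `W` at some step `a → b`; then `b` has a vertex `u ∉ W` together with the `k`-set
`a ∩ b ⊆ W`, so adding `u` to `W` creates at least `C(k,d)` new `d`-faces `{u} ∪ S`,
`S ⊆ a ∩ b`. -/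

theorem Relation.ReflTransGen.exists_step_of_not {α : Type*} {r : α → α → Prop} {p : α → Prop}
    {a b : α} (h : Relation.ReflTransGen r a b) (ha : p a) (hb : ¬ p b) :
    ∃ x y, r x y ∧ p x ∧ ¬ p y := by
  induction h with
  | refl => exact absurd ha hb
  | @tail c b _ hcb ih =>
    by_cases hc : p c
    · exact ⟨c, b, hcb, hc, hb⟩
    · exact ih hc

namespace Cx

open Finset

variable {V : Type*}

open Classical in
noncomputable def facesIn (K : Cx V) (d : ℕ) (W : Finset V) : Finset (Finset V) :=
  {s ∈ W.powersetCard (d + 1) | s ∈ K.faces}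

open Classical in
noncomputable def vertexFinset [Fintype V] (K : Cx V) : Finset V :=
  {v | {v} ∈ K.faces}

@[simp]
theorem mem_vertexFinset [Fintype V] {K : Cx V} {v : V} : v ∈ K.vertexFinset ↔ {v} ∈ K.faces := by
  classical
  simp [vertexFinset]

theorem card_vertexFinset [Fintype V] (K : Cx V) : #K.vertexFinset = K.vertCount := by
  classical
  rw [vertCount, Nat.card_eq_fintype_card, Fintype.card_subtype, vertexFinset]

theorem card_facesIn_vertexFinset [Fintype V] (K : Cx V) (d : ℕ) :
    #(K.facesIn d K.vertexFinset) = K.fcount d := by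
  classical
  rw [fcount, Nat.card_eq_fintype_card, Fintype.card_subtype]
  congr 1
  ext s
  simp only [facesIn, mem_filter, mem_powersetCard, mem_univ, true_and]
  exact ⟨fun ⟨⟨_, hs⟩, hf⟩ => ⟨hf, hs⟩, fun ⟨hf, hs⟩ =>
    ⟨⟨fun v hv => mem_vertexFinset.2 (K.down hf (singleton_subset_iff.2 hv)), hs⟩, hf⟩⟩

theorem card_facesIn_of_mem_faces (K : Cx V) (d : ℕ) {σ : Finset V} (hσ : σ ∈ K.faces) :
    #(K.facesIn d σ) = (#σ).choose (d + 1) := by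
  classical
  rw [facesIn, filter_true_of_mem fun s hs => K.down hσ (mem_powersetCard.1 hs).1,
    card_powersetCard]

theorem card_facesIn_add_choose_le [DecidableEq V] (K : Cx V) (d : ℕ) {W B : Finset V} {u : V}
    (hBW : B ⊆ W) (hu : u ∉ W) (hface : insert u B ∈ K.faces) :
    #(K.facesIn d W) + (#B).choose d ≤ #(K.facesIn d (insert u W)) := by
  have huB : ∀ t ∈ B.powersetCard d, u ∉ t := fun t ht hut =>
    hu (hBW ((mem_powersetCard.1 ht).1 hut))
  have hnew : (B.powersetCard d).image (insert u) ⊆ K.facesIn d (insert u W) := by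
    intro s hs
    obtain ⟨t, ht, rfl⟩ := mem_image.1 hs
    obtain ⟨htB, htd⟩ := mem_powersetCard.1 ht
    simp only [facesIn, mem_filter, mem_powersetCard]
    refine ⟨⟨insert_subset_insert u (htB.trans hBW), ?_⟩, K.down hface (insert_subset_insert u htB)⟩
    rw [card_insert_of_notMem (huB t ht), htd]
  have hdisj : Disjoint (K.facesIn d W) ((B.powersetCard d).image (insert u)) := by
    simp only [disjoint_left, mem_image, facesIn, mem_filter, mem_powersetCard]
    rintro _ ⟨⟨hsW, -⟩, -⟩ ⟨t, -, rfl⟩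
    exact hu (hsW (mem_insert_self u t))
  have hold : K.facesIn d W ⊆ K.facesIn d (insert u W) := by
    classical
    exact filter_subset_filter _ (powersetCard_mono (subset_insert u W))
  have hinj : Set.InjOn (insert u) (B.powersetCard d : Set (Finset V)) := fun t₁ h₁ t₂ h₂ heq => by
    rw [← erase_insert (huB t₁ h₁), ← erase_insert (huB t₂ h₂), heq]
  calc #(K.facesIn d W) + (#B).choose d
      = #(K.facesIn d W ∪ (B.powersetCard d).image (insert u)) := by
        rw [card_union_of_disjoint hdisj, card_image_of_injOn hinj, card_powersetCard]
    _ ≤ #(K.facesIn d (insert u W)) := card_le_card (union_subset hold hnew)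

theorem le_card_facesIn_insert [DecidableEq V] (K : Cx V) {k d : ℕ} {W B : Finset V} {u : V}
    (hW : (k + 1).choose (d + 1) + k.choose d * (#W - (k + 1)) ≤ #(K.facesIn d W))
    (hkW : k + 1 ≤ #W) (hBW : B ⊆ W) (hB : #B = k) (hu : u ∉ W) (hface : insert u B ∈ K.faces) :
    (k + 1).choose (d + 1) + k.choose d * (#(insert u W) - (k + 1)) ≤
      #(K.facesIn d (insert u W)) := by
  have hstep := K.card_facesIn_add_choose_le d hBW hu hface
  rw [hB] at hstep
  rw [card_insert_of_notMem hu, Nat.sub_add_comm hkW, mul_add_one]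
  omega

theorem exists_isFacet_superset [Finite V] (K : Cx V) {s : Finset V} (hs : s ∈ K.faces) :
    ∃ t, IsFacet K t ∧ s ⊆ t := by
  obtain ⟨t, ⟨ht, hst⟩, hmax⟩ :=
    (Set.toFinite {t | t ∈ K.faces ∧ s ⊆ t}).exists_maximal ⟨s, hs, subset_rfl⟩
  exact ⟨t, ⟨ht, fun t' ht' htt' => (hmax ⟨ht', hst.trans htt'⟩ htt').antisymm htt'⟩, hst⟩

end Cx

namespace StronglyConnected

open Finset Cx

variable {V : Type*} [DecidableEq V] {K : Cx V} {k : ℕ}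

theorem exists_isFacet [Finite V] (h : StronglyConnected K k) :
    ∃ σ, IsFacet K σ ∧ #σ = k + 1 := by
  obtain ⟨⟨σ, hσ, hcard⟩, hpure, -⟩ := h
  obtain ⟨τ, hτ, hστ⟩ := K.exists_isFacet_superset hσ
  have : σ = τ := eq_of_subset_of_card_le hστ ((hpure τ hτ).trans hcard.symm).le
  exact ⟨σ, this ▸ hτ, hcard⟩

theorem exists_ridge_extension [Finite V] (h : StronglyConnected K k) {σ W : Finset V}
    (hσ : IsFacet K σ) (hσW : σ ⊆ W) {v : V} (hv : {v} ∈ K.faces) (hvW : v ∉ W) :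
    ∃ u ∉ W, ∃ B ⊆ W, #B = k ∧ insert u B ∈ K.faces := by
  obtain ⟨τ, hτ, hvτ⟩ := K.exists_isFacet_superset hv
  obtain ⟨a, b, ⟨-, hb, hab⟩, haW, hbW⟩ :=
    (h.2.2 σ τ hσ hτ).exists_step_of_not (p := (· ⊆ W)) hσW
      fun hτW => hvW (hτW (singleton_subset_iff.1 hvτ))
  obtain ⟨u, hub, huW⟩ := not_subset.1 hbW
  exact ⟨u, huW, a ∩ b, inter_subset_left.trans haW, hab,
    K.down hb.1 (insert_subset hub inter_subset_right)⟩

theorem choose_add_mul_le_card_facesIn [Fintype V] (h : StronglyConnected K k) (d : ℕ) :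
    (k + 1).choose (d + 1) + k.choose d * (#K.vertexFinset - (k + 1)) ≤
      #(K.facesIn d K.vertexFinset) := by
  classical
  obtain ⟨σ, hσ, hσk⟩ := h.exists_isFacet
  let bound : Finset V → Prop := fun W =>
    (k + 1).choose (d + 1) + k.choose d * (#W - (k + 1)) ≤ #(K.facesIn d W)
  have hσV : σ ⊆ K.vertexFinset := fun v hv =>
    mem_vertexFinset.2 (K.down hσ.1 (singleton_subset_iff.2 hv))
  have hσbound : bound σ := by
    simp only [bound, K.card_facesIn_of_mem_faces d hσ.1, hσk, Nat.sub_self, mul_zero, add_zero,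
      le_refl]
  obtain ⟨W, hW, hmax⟩ := exists_max_image
    {W ∈ K.vertexFinset.powerset | σ ⊆ W ∧ bound W} card
    ⟨σ, mem_filter.2 ⟨mem_powerset.2 hσV, subset_rfl, hσbound⟩⟩
  obtain ⟨hWV, hσW, hWbound⟩ := by simpa only [mem_filter, mem_powerset] using hW
  suffices hWeq : W = K.vertexFinset from hWeq ▸ hWbound
  by_contra hne
  obtain ⟨v, hvV, hvW⟩ := not_subset.1 fun hVW => hne (hWV.antisymm hVW)
  obtain ⟨u, huW, B, hBW, hBk, hface⟩ :=
    h.exists_ridge_extension hσ hσW (mem_vertexFinset.1 hvV) hvW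
  have huV : u ∈ K.vertexFinset :=
    mem_vertexFinset.2 (K.down hface (singleton_subset_iff.2 (mem_insert_self u B)))
  have hgrow := hmax (insert u W) (mem_filter.2 ⟨mem_powerset.2 (insert_subset huV hWV),
    hσW.trans (subset_insert u W), K.le_card_facesIn_insert hWbound
      (hσk ▸ card_le_card hσW) hBW hBk huW hface⟩)
  rw [card_insert_of_notMem huW] at hgrow
  omega

end StronglyConnected

theorem stmt12_general {V : Type*} [Fintype V] [DecidableEq V] (Δ : Cx V) (k d : ℕ)
    (h : StronglyConnected Δ k) :
    (k+1).choose (d+1) + k.choose d * (Δ.vertCount - (k+1)) ≤ Δ.fcount d := by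
  rw [← Δ.card_vertexFinset, ← Δ.card_facesIn_vertexFinset]
  exact h.choose_add_mul_le_card_facesIn d

/-- A strongly connected `k`-dimensional complex on `v` vertices
has at least `C(k+1, d+1) + C(k,d)·(v − k − 1)` faces of dimension `d`, for `d ≤ k`. -/
theorem stmt12 {V : Type*} [Fintype V] [DecidableEq V] (Δ : Cx V) (k d : ℕ)
    (hd : d ≤ k) (h : StronglyConnected Δ k) :
    (k+1).choose (d+1) + k.choose d * (Δ.vertCount - (k+1)) ≤ Δ.fcount d :=
  stmt12_general Δ k d h
end
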